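/- arXiv:2307.08516 — 5 statements merged into one kernel-verified Lean document; each statement's English description precedes it below -/
import Mathlib

section
/- For every natural number n ≥ 3, every vertex v of the cycle graph C_n, and every closed walk p based at v that is a cycle, the list of edges of p has no duplicates and, regarded as a finite set, equals the full edge set of C_n. Consequently, for any weight function f from the edge set of C_n to a commutative ring R, the product of f over the edges of p equals the product of f over all edges of C_n. -/
open SimpleGraph Walk
open Fin.NatCast
open Fin.CommRing

/-- In any graph, a cycle based at `x` gives two distinct neighbors of `x`
lying in its support. -/
lemma cycle_two_neighbors {V : Type*} {G : SimpleGraph V} {x : V} {q : G.Walk x x}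
    (hq : q.IsCycle) :
    ∃ y z, y ≠ z ∧ G.Adj x y ∧ G.Adj x z ∧ y ∈ q.support ∧ z ∈ q.support := by
  have hlen := hq.three_le_length
  cases q with
  | nil => exact absurd hq Walk.IsCycle.not_of_nil
  | @cons _ y _ h q' =>
    have hq'darts : q'.darts ≠ [] := by
      have : q'.length ≠ 0 := by
        simp only [Walk.length_cons] at hlen; omega
      intro hnil
      apply this
      have := q'.length_darts
      rw [hnil] at this
      simpa using this.symm
    set d := q'.darts.getLast hq'darts with hd
    have hdmem : d ∈ q'.darts := List.getLast_mem _
    have hdsnd : d.snd = x := by rw [hd, getLast_darts_eq_lastDart]; simp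
    refine ⟨y, d.fst, ?_, h, ?_, ?_, ?_⟩
    · -- y ≠ d.fst
      intro hyz
      have hnodup : (Walk.cons h q').edges.Nodup := hq.isCircuit.isTrail.edges_nodup
      rw [Walk.edges_cons, List.nodup_cons] at hnodup
      apply hnodup.1
      have : d.edge ∈ q'.edges := List.mem_map_of_mem hdmem
      have hedge : d.edge = s(x, y) := by
        rw [Sym2.eq_swap]
        rw [Dart.edge, hdsnd, ← hyz]
      rwa [hedge] at this
    · have := d.adj
      rw [hdsnd] at this
      exact this.symm
    · rw [Walk.support_cons]
      exact List.mem_cons_of_mem _ q'.start_mem_support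
    · rw [Walk.support_cons]
      exact List.mem_cons_of_mem _ (q'.dart_fst_mem_support_of_mem_darts hdmem)

lemma mem_support_iff_mem_tail {V : Type*} {G : SimpleGraph V} {v x : V} {p : G.Walk v v}
    (hnil : ¬ p.Nil) : x ∈ p.support ↔ x ∈ p.support.tail := by
  constructor
  · intro hx
    rw [p.support_eq_cons] at hx
    rcases List.mem_cons.mp hx with rfl | hx
    · exact p.end_mem_tail_support hnil
    · exact hx
  · intro hx
    rw [p.support_eq_cons]
    exact List.mem_cons_of_mem _ hx

/-- In `C_{m+3}`, the support of a cycle is closed under taking neighbors. -/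
lemma cycle_support_closed {m : ℕ} {v : Fin (m + 3)} {p : (SimpleGraph.cycleGraph (m + 3)).Walk v v}
    (hp : p.IsCycle) {x : Fin (m + 3)} (hx : x ∈ p.support) :
    x + 1 ∈ p.support ∧ x - 1 ∈ p.support := by
  have hq : (p.rotate x hx).IsCycle := hp.rotate hx
  obtain ⟨y, z, hyz, hay, haz, hys, hzs⟩ := cycle_two_neighbors hq
  have hmem : ∀ w, w ∈ (p.rotate x hx).support → w ∈ p.support := by
    intro w hw
    rw [mem_support_iff_mem_tail hq.not_nil] at hw
    rw [mem_support_iff_mem_tail hp.not_nil]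
    exact (p.support_rotate _ hx).mem_iff.mp hw
  have hcase : ∀ w : Fin (m + 3), (SimpleGraph.cycleGraph (m + 3)).Adj x w →
      w = x + 1 ∨ w = x - 1 := by
    intro w hw
    rw [SimpleGraph.cycleGraph_adj] at hw
    rcases hw with hw | hw
    · right; rw [← hw]; ring
    · left; rw [← hw]; ring
  rcases hcase y hay with rfl | rfl <;> rcases hcase z haz with rfl | rfl
  · exact absurd rfl hyz
  · exact ⟨hmem _ hys, hmem _ hzs⟩
  · exact ⟨hmem _ hzs, hmem _ hys⟩
  · exact absurd rfl hyz

/-- Every cycle based at a vertex of `C_n` (`n ≥ 3`) has duplicate-free edge list whose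
underlying finite set is the full edge set of `C_n`; consequently the product of any
weight function over its edges equals the product over all edges of `C_n`. -/
theorem cycleGraph_isCycle_edges (n : ℕ) (hn : 3 ≤ n) (v : Fin n)
    (p : (SimpleGraph.cycleGraph n).Walk v v) (hp : p.IsCycle) :
    p.edges.Nodup ∧ p.edges.toFinset = (SimpleGraph.cycleGraph n).edgeFinset ∧
    ∀ (R : Type) [CommRing R] (f : Sym2 (Fin n) → R),
      (p.edges.map f).prod = ∏ e ∈ (SimpleGraph.cycleGraph n).edgeFinset, f e := by
  obtain ⟨m, rfl⟩ : ∃ m, n = m + 3 := ⟨n - 3, by omega⟩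
  have hnodup : p.edges.Nodup := hp.isCircuit.isTrail.edges_nodup
  -- every vertex is in the support
  have hall : ∀ w : Fin (m + 3), w ∈ p.support := by
    have hstep : ∀ k : ℕ, v + (k : Fin (m + 3)) ∈ p.support := by
      intro k
      induction k with
      | zero => simpa using p.start_mem_support
      | succ k ih =>
        have := (cycle_support_closed hp ih).1
        have hcast : ((k + 1 : ℕ) : Fin (m + 3)) = (k : Fin (m + 3)) + 1 := by push_cast; ring
        rw [hcast, ← add_assoc]
        exact this
    intro w
    have := hstep (w - v).val
    rwa [Fin.cast_val_eq_self, add_sub_cancel] at this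
  -- length lower bound
  have hlen : m + 3 ≤ p.length := by
    have htail : ∀ w : Fin (m + 3), w ∈ p.support.tail := fun w =>
      (mem_support_iff_mem_tail hp.not_nil).mp (hall w)
    have hsub : (Finset.univ : Finset (Fin (m + 3))) ⊆ p.support.tail.toFinset := by
      intro w _; exact List.mem_toFinset.mpr (htail w)
    have := Finset.card_le_card hsub
    rw [Finset.card_univ, Fintype.card_fin, List.toFinset_card_of_nodup hp.support_nodup] at this
    have hl : p.support.tail.length = p.length := by
      have := p.length_support
      have := p.support_eq_cons
      simp [List.length_tail, p.length_support]
    omega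
  -- card of edge set
  have hcardE : (SimpleGraph.cycleGraph (m + 3)).edgeFinset.card = m + 3 := by
    have hsum := SimpleGraph.sum_degrees_eq_twice_card_edges (SimpleGraph.cycleGraph (m + 3))
    have : ∑ w : Fin (m + 3), (SimpleGraph.cycleGraph (m + 3)).degree w = 2 * (m + 3) := by
      rw [Finset.sum_congr rfl fun w _ => SimpleGraph.cycleGraph_degree_three_le]
      simp [mul_comm]
    omega
  -- Finset equality
  have hsubset : p.edges.toFinset ⊆ (SimpleGraph.cycleGraph (m + 3)).edgeFinset := by
    intro e he
    rw [List.mem_toFinset] at he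
    exact SimpleGraph.mem_edgeFinset.mpr (p.edges_subset_edgeSet he)
  have hcardp : p.edges.toFinset.card = p.length := by
    rw [List.toFinset_card_of_nodup hnodup, p.length_edges]
  have heq : p.edges.toFinset = (SimpleGraph.cycleGraph (m + 3)).edgeFinset := by
    apply Finset.eq_of_subset_of_card_le hsubset
    omega
  refine ⟨hnodup, heq, fun R _ f => ?_⟩
  rw [← heq, List.prod_toFinset f hnodup]
end

section
/- Let n ≥ 3, let R be a commutative ring, let f be a weight function from the edge set of the cycle graph C_n to R, and let v be any vertex of C_n. Then the cycle-sum Σ_{e ∈ edgeFinset} f(e)² + Σ_{p cycle based at v} Π_{e ∈ p.edges} f(e) equals Σ_{e ∈ edgeFinset} f(e)² + 2·Π_{e ∈ edgeFinset} f(e). -/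
open SimpleGraph Walk
open Fin.CommRing

/-- Two walks with the same endpoints are equal if they have the same length and vertices. -/
theorem walk_ext {V : Type*} {G : SimpleGraph V} : ∀ {u v : V} (p q : G.Walk u v),
    p.length = q.length → (∀ i, p.getVert i = q.getVert i) → p = q
  | u, _, .nil, q, hl, _ => by
      have : q.length = 0 := hl.symm
      exact (Walk.nil_iff_eq_nil.mp (Walk.length_eq_zero_iff.mp this)).symm
  | u, _, .cons h p, .nil, hl, _ => by simp at hl
  | u, v, .cons (v := a) h p, .cons (v := b) h' q, hl, hv => by
      have hab : a = b := by
        have := hv 1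
        simpa [Walk.getVert_cons_succ, Walk.getVert_zero] using this
      subst hab
      have : p = q := walk_ext p q (by simpa using hl) (fun i => by
        have := hv (i + 1); simpa [Walk.getVert_cons_succ] using this)
      subst this
      rfl


lemma val_one_fin {n : ℕ} [NeZero n] (hn : 3 ≤ n) : ((1 : Fin n)).val = 1 := by
  rw [Fin.val_one']; exact Nat.mod_eq_of_lt (by omega)

lemma adj_add {n : ℕ} [NeZero n] (hn : 3 ≤ n) {d : Fin n} (hd : d = 1 ∨ d = -1) (w : Fin n) :
    (SimpleGraph.cycleGraph n).Adj w (w + d) := by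
  rw [SimpleGraph.cycleGraph_adj']
  rcases hd with rfl | rfl
  · right; simpa using val_one_fin hn
  · left; simpa using val_one_fin hn

def wlk (n : ℕ) [NeZero n] (hn : 3 ≤ n) (d : Fin n) (hd : d = 1 ∨ d = -1) :
    (k : ℕ) → (v : Fin n) → (SimpleGraph.cycleGraph n).Walk v (v + (k : Fin n) * d)
  | 0, v => Walk.nil.copy rfl (by simp)
  | k+1, v => ((wlk n hn d hd k (v + d)).cons (adj_add hn hd v)).copy rfl
      (by push_cast; ring)

lemma length_wlk {n : ℕ} [NeZero n] (hn : 3 ≤ n) {d : Fin n} (hd : d = 1 ∨ d = -1) :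
    ∀ (k : ℕ) (v : Fin n), (wlk n hn d hd k v).length = k
  | 0, v => by simp [wlk]
  | k+1, v => by simp [wlk, length_wlk hn hd k]

lemma getVert_wlk {n : ℕ} [NeZero n] (hn : 3 ≤ n) {d : Fin n} (hd : d = 1 ∨ d = -1) :
    ∀ (k : ℕ) (v : Fin n) (i : ℕ),
      (wlk n hn d hd k v).getVert i = v + ((min i k : ℕ) : Fin n) * d
  | 0, v, i => by
      rw [wlk, Walk.getVert_copy]
      rw [Walk.getVert_of_length_le _ (by simp)]
      simp
  | k+1, v, 0 => by simp [wlk]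
  | k+1, v, i+1 => by
      rw [wlk, Walk.getVert_copy, Walk.getVert_cons_succ, getVert_wlk hn hd k (v + d) i]
      have : (min (i+1) (k+1)) = (min i k) + 1 := by omega
      rw [this]
      push_cast
      ring

lemma edges_wlk {n : ℕ} [NeZero n] (hn : 3 ≤ n) {d : Fin n} (hd : d = 1 ∨ d = -1) :
    ∀ (k : ℕ) (v : Fin n), (wlk n hn d hd k v).edges =
      (List.range k).map (fun (i : ℕ) => s(v + (i : Fin n) * d, v + (i : Fin n) * d + d))
  | 0, v => by simp [wlk]
  | k+1, v => by
      rw [wlk, Walk.edges_copy, Walk.edges_cons, edges_wlk hn hd k (v + d),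
        List.range_succ_eq_map, List.map_cons, List.map_map]
      congr 1
      · push_cast; ring_nf
      · apply List.map_congr_left
        intro i _
        simp only [Function.comp]
        push_cast
        ring_nf

lemma support_wlk {n : ℕ} [NeZero n] (hn : 3 ≤ n) {d : Fin n} (hd : d = 1 ∨ d = -1) :
    ∀ (k : ℕ) (v : Fin n), (wlk n hn d hd k v).support =
      (List.range (k+1)).map (fun (i : ℕ) => v + (i : Fin n) * d)
  | 0, v => by simp [wlk, List.range_succ]
  | k+1, v => by
      rw [wlk, Walk.support_copy, Walk.support_cons, support_wlk hn hd k (v + d),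
        List.range_succ_eq_map (n := k+1), List.map_cons, List.map_map]
      congr 1
      · push_cast; ring_nf
      · apply List.map_congr_left
        intro i _
        simp only [Function.comp]
        push_cast
        ring_nf

lemma getVert_eq_support_getElem {V : Type*} {G : SimpleGraph V} :
    ∀ {u v : V} (p : G.Walk u v) (i : ℕ) (h : i < p.support.length),
      p.getVert i = p.support[i]
  | u, _, .nil, 0, h => rfl
  | u, v, .cons ha p, 0, h => rfl
  | u, v, .cons ha p, i+1, h => by
      rw [Walk.getVert_cons_succ]
      simp only [Walk.support_cons, List.getElem_cons_succ]
      exact getVert_eq_support_getElem p i (by simpa [Walk.length_support] using h)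

lemma cycle_getVert_injOn {V : Type*} {G : SimpleGraph V} {v : V} {p : G.Walk v v}
    (hp : p.IsCycle) {i j : ℕ} (hi : i < p.length) (hj : j < p.length)
    (hij : p.getVert i = p.getVert j) : i = j := by
  have hnd := hp.support_nodup
  have h3 := hp.three_le_length
  have hlt : p.support.tail.length = p.length := by
    simp [List.length_tail, Walk.length_support]
  have key : ∀ (m : ℕ) (hm : m < p.length),
      p.getVert (m+1) = p.support.tail[m]'(by omega) := by
    intro m hm
    rw [List.getElem_tail]
    exact getVert_eq_support_getElem p (m+1) (by rw [Walk.length_support]; omega)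
  have hv : ∀ (j : ℕ), j < p.length → p.getVert j = v → j = 0 := by
    intro j hj hjv
    by_contra h0
    obtain ⟨m, rfl⟩ : ∃ m, j = m + 1 := ⟨j - 1, by omega⟩
    have e1 : p.getVert (m+1) = p.getVert (p.length - 1 + 1) := by
      rw [hjv]
      have : p.length - 1 + 1 = p.length := by omega
      rw [this, Walk.getVert_length]
    rw [key m (by omega), key (p.length - 1) (by omega)] at e1
    have := (hnd.getElem_inj_iff).mp e1
    omega
  by_cases h0i : i = 0
  · subst h0i
    rw [Walk.getVert_zero] at hij
    exact (hv j hj hij.symm).symm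
  · by_cases h0j : j = 0
    · subst h0j
      rw [Walk.getVert_zero] at hij
      exact hv i hi hij
    · obtain ⟨a, rfl⟩ : ∃ a, i = a + 1 := ⟨i - 1, by omega⟩
      obtain ⟨b, rfl⟩ : ∃ b, j = b + 1 := ⟨j - 1, by omega⟩
      rw [key a (by omega), key b (by omega)] at hij
      have := (hnd.getElem_inj_iff).mp hij
      omega

lemma fin_adj_cases {n : ℕ} [NeZero n] (hn : 3 ≤ n) {a b : Fin n}
    (h : (SimpleGraph.cycleGraph n).Adj a b) : b = a + 1 ∨ b = a - 1 := by
  rw [SimpleGraph.cycleGraph_adj'] at h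
  rcases h with h | h
  · right
    have : a - b = 1 := Fin.ext (by rw [h, val_one_fin hn])
    rw [← this]; ring
  · left
    have : b - a = 1 := Fin.ext (by rw [h, val_one_fin hn])
    rw [← this]; ring

lemma cycle_classify {n : ℕ} [NeZero n] (hn : 3 ≤ n) {v : Fin n}
    {p : (SimpleGraph.cycleGraph n).Walk v v} (hp : p.IsCycle) :
    ∃ (d : Fin n) (hd : d = 1 ∨ d = -1),
      p = (wlk n hn d hd n v).copy rfl (by simp) := by
  have h3 := hp.three_le_length
  set d : Fin n := p.getVert 1 - v with hd_def
  have hd : d = 1 ∨ d = -1 := by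
    have hadj : (SimpleGraph.cycleGraph n).Adj v (p.getVert 1) := by
      have := p.adj_getVert_succ (i := 0) (by omega)
      simpa using this
    rcases fin_adj_cases hn hadj with h | h
    · left; rw [hd_def, h]; ring
    · right; rw [hd_def, h]; ring
  have step : ∀ i, i < p.length → p.getVert (i+1) = p.getVert i + d := by
    intro i
    induction i with
    | zero => intro _; simp [hd_def]
    | succ i ih =>
      intro hi
      have hstep := ih (by omega)
      have hcontra : p.getVert (i+2) ≠ p.getVert i := by
        intro h
        rcases Nat.lt_or_ge (i+2) p.length with hlt | hge
        · have := cycle_getVert_injOn hp hlt (by omega) h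
          omega
        · have hi2 : i + 2 = p.length := by omega
          have hgv : p.getVert i = v := by
            rw [← h, hi2, Walk.getVert_length]
          have : i = 0 := by
            have h0 : p.getVert i = p.getVert 0 := by simpa using hgv
            exact cycle_getVert_injOn hp (by omega) (by omega) h0
          omega
      have hadj := p.adj_getVert_succ (i := i+1) hi
      rcases fin_adj_cases hn hadj with h | h
      all_goals rcases hd with h1 | h1
      · rw [h, h1]
      · exfalso; apply hcontra
        rw [h, hstep, h1]; ring
      · exfalso; apply hcontra
        rw [h, hstep, h1]; ring
      · rw [h, h1]; ring
  have formula : ∀ i, i ≤ p.length → p.getVert i = v + (i : Fin n) * d := by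
    intro i
    induction i with
    | zero => intro _; simp
    | succ i ih =>
      intro hi
      rw [step i (by omega), ih (by omega)]
      push_cast
      ring
  have hdd : d * d = 1 := by rcases hd with h1 | h1 <;> rw [h1] <;> ring
  have hlen : p.length = n := by
    have hdvd : n ∣ p.length := by
      rw [← Fin.natCast_eq_zero]
      have := formula p.length le_rfl
      rw [Walk.getVert_length] at this
      have h0 : (p.length : Fin n) * d = 0 := by
        have h' := this.symm
        rwa [add_eq_left] at h'
      calc (p.length : Fin n) = (p.length : Fin n) * (d * d) := by rw [hdd, mul_one]
        _ = ((p.length : Fin n) * d) * d := by ring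
        _ = 0 := by rw [h0, zero_mul]
    have hle : p.length ≤ n := by
      have := Finset.card_le_card_of_injOn (f := fun i => p.getVert i)
        (s := Finset.range p.length) (t := Finset.univ)
        (fun a _ => Finset.mem_univ _)
        (fun a ha b hb hab => cycle_getVert_injOn hp
          (Finset.mem_range.mp ha) (Finset.mem_range.mp hb) hab)
      simpa using this
    obtain ⟨c, hc⟩ := hdvd
    rcases c with _ | _ | c
    · omega
    · omega
    · exfalso; nlinarith
  refine ⟨d, hd, ?_⟩
  apply walk_ext
  · rw [Walk.length_copy, length_wlk hn hd, hlen]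
  · intro i
    rw [Walk.getVert_copy, getVert_wlk hn hd]
    rcases le_or_gt i n with h | h
    · rw [formula i (by omega), Nat.min_eq_left h]
    · rw [Walk.getVert_of_length_le _ (by omega), Nat.min_eq_right (by omega),
        Fin.natCast_self, zero_mul, add_zero]

lemma natCast_fin_mod {n : ℕ} [NeZero n] {i j : ℕ} (h : (i : Fin n) = (j : Fin n)) :
    i % n = j % n := by
  have := congrArg Fin.val h
  rwa [Fin.val_natCast, Fin.val_natCast] at this

lemma cancel_d {n : ℕ} [NeZero n] {d : Fin n} (hd : d = 1 ∨ d = -1) {x y : Fin n}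
    (h : x * d = y * d) : x = y := by
  have hdd : d * d = 1 := by rcases hd with h1 | h1 <;> rw [h1] <;> ring
  calc x = x * (d * d) := by rw [hdd, mul_one]
    _ = (x * d) * d := by ring
    _ = (y * d) * d := by rw [h]
    _ = y * (d * d) := by ring
    _ = y := by rw [hdd, mul_one]

lemma two_ne_zero_fin {n : ℕ} [NeZero n] (hn : 3 ≤ n) : (2 : Fin n) ≠ 0 := by
  intro h
  have h2 : ((2 : ℕ) : Fin n) = 0 := by push_cast; exact h
  rw [Fin.natCast_eq_zero] at h2
  exact absurd (Nat.le_of_dvd (by norm_num) h2) (by omega)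

lemma natCast_fin_inj {n : ℕ} [NeZero n] {i j : ℕ} (hi : i < n) (hj : j < n)
    (h : (i : Fin n) = (j : Fin n)) : i = j := by
  have hmod := natCast_fin_mod h
  rwa [Nat.mod_eq_of_lt hi, Nat.mod_eq_of_lt hj] at hmod

lemma natCast_fin_inj' {n : ℕ} [NeZero n] {i j : ℕ} (hi : 0 < i) (hi' : i ≤ n)
    (hj : 0 < j) (hj' : j ≤ n) (h : (i : Fin n) = (j : Fin n)) : i = j := by
  have hmod := natCast_fin_mod h
  rcases eq_or_lt_of_le hi' with h2 | h2 <;> rcases eq_or_lt_of_le hj' with h3 | h3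
  · omega
  · subst h2; rw [Nat.mod_self, Nat.mod_eq_of_lt h3] at hmod; omega
  · subst h3; rw [Nat.mod_self, Nat.mod_eq_of_lt h2] at hmod; omega
  · rwa [Nat.mod_eq_of_lt h2, Nat.mod_eq_of_lt h3] at hmod

lemma edge_fn_inj {n : ℕ} [NeZero n] (hn : 3 ≤ n) {d : Fin n} (hd : d = 1 ∨ d = -1)
    (v : Fin n) {i j : ℕ} (hi : i < n) (hj : j < n)
    (h : s(v + (i : Fin n) * d, v + (i : Fin n) * d + d)
       = s(v + (j : Fin n) * d, v + (j : Fin n) * d + d)) : i = j := by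
  rw [Sym2.eq_iff] at h
  rcases h with ⟨h1, h2⟩ | ⟨h1, h2⟩
  · exact natCast_fin_inj hi hj (cancel_d hd (by linear_combination h1))
  · exfalso
    apply two_ne_zero_fin hn
    have h2d : (2 : Fin n) * d = 0 := by linear_combination h2 - h1
    exact cancel_d hd (by rw [h2d, zero_mul])

lemma wlk_isCycle {n : ℕ} [NeZero n] (hn : 3 ≤ n) {d : Fin n} (hd : d = 1 ∨ d = -1)
    (v : Fin n) :
    ((wlk n hn d hd n v).copy rfl (by simp)).IsCycle := by
  rw [Walk.isCycle_def]
  refine ⟨⟨?_⟩, ?_, ?_⟩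
  · rw [Walk.edges_copy, edges_wlk hn hd]
    apply List.Nodup.map_on ?_ List.nodup_range
    intro i hi j hj h
    exact edge_fn_inj hn hd v (List.mem_range.mp hi) (List.mem_range.mp hj) h
  · intro h
    have := congrArg Walk.length h
    rw [Walk.length_copy, length_wlk hn hd] at this
    simp at this
    omega
  · rw [Walk.support_copy, support_wlk hn hd, List.range_succ_eq_map, List.map_cons,
      List.tail_cons, List.map_map]
    apply List.Nodup.map_on ?_ List.nodup_range
    intro i hi j hj h
    simp only [Function.comp] at h
    have h' : ((i + 1 : ℕ) : Fin n) * d = ((j + 1 : ℕ) : Fin n) * d := by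
      push_cast at h ⊢
      linear_combination h
    have hi' := List.mem_range.mp hi
    have hj' := List.mem_range.mp hj
    have := natCast_fin_inj' (by omega) (by omega) (by omega) (by omega) (cancel_d hd h')
    omega

lemma exists_edge {n : ℕ} [NeZero n] (hn : 3 ≤ n) {d : Fin n} (hd : d = 1 ∨ d = -1)
    (v a : Fin n) : ∃ i : ℕ, i < n ∧
      s(v + (i : Fin n) * d, v + (i : Fin n) * d + d) = s(a, a+1) := by
  rcases hd with rfl | rfl
  · refine ⟨(a - v).val, (a - v).isLt, ?_⟩
    have h1 : v + (((a - v).val : ℕ) : Fin n) * 1 = a := by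
      rw [Fin.cast_val_eq_self]; ring
    rw [h1]
  · refine ⟨(v - (a + 1)).val, (v - (a + 1)).isLt, ?_⟩
    have h1 : v + (((v - (a + 1)).val : ℕ) : Fin n) * (-1) = a + 1 := by
      rw [Fin.cast_val_eq_self]; ring
    rw [h1]
    have h2 : a + 1 + (-1) = a := by ring
    rw [h2, Sym2.eq_swap]

lemma prod_edges {n : ℕ} [NeZero n] (hn : 3 ≤ n) {d : Fin n} (hd : d = 1 ∨ d = -1)
    (v : Fin n) {R : Type} [CommRing R] (f : Sym2 (Fin n) → R) :
    ∏ i ∈ Finset.range n, f s(v + (i : Fin n) * d, v + (i : Fin n) * d + d) =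
      ∏ e ∈ (SimpleGraph.cycleGraph n).edgeFinset, f e := by
  apply Finset.prod_bij
    (i := fun (i : ℕ) (_ : i ∈ Finset.range n) => s(v + (i : Fin n) * d, v + (i : Fin n) * d + d))
  · intro a _
    rw [SimpleGraph.mem_edgeFinset, SimpleGraph.mem_edgeSet]
    exact adj_add hn hd _
  · intro a ha b hb h
    exact edge_fn_inj hn hd v (Finset.mem_range.mp ha) (Finset.mem_range.mp hb) h
  · intro e he
    rw [SimpleGraph.mem_edgeFinset] at he
    induction e with
    | _ a b =>
      rw [SimpleGraph.mem_edgeSet] at he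
      rcases fin_adj_cases hn he with h | h
      · obtain ⟨i, hi, hie⟩ := exists_edge hn hd v a
        exact ⟨i, Finset.mem_range.mpr hi, by rw [hie, h]⟩
      · obtain ⟨i, hi, hie⟩ := exists_edge hn hd v b
        refine ⟨i, Finset.mem_range.mpr hi, ?_⟩
        rw [hie, Sym2.eq_swap]
        congr 1
        rw [h]; ring
  · intro a _
    rfl

lemma list_prod_range {R : Type} [CommMonoid R] (h : ℕ → R) (k : ℕ) :
    ((List.range k).map h).prod = ∏ i ∈ Finset.range k, h i := by
  induction k with
  | zero => simp
  | succ k ih => rw [List.range_succ, Finset.prod_range_succ, List.map_append]; simp [ih]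

/-- The cycle-sum of the cycle graph `C_n` (`n ≥ 3`) with weight function `f` at any
vertex `v` equals `Σ_{e} f(e)² + 2·Π_{e} f(e)`. -/
theorem cycleGraph_cycleSum (n : ℕ) (hn : 3 ≤ n) (R : Type) [CommRing R]
    (f : Sym2 (Fin n) → R) (v : Fin n) :
    (∑ e ∈ (SimpleGraph.cycleGraph n).edgeFinset, f e ^ 2) +
      (∑ᶠ p ∈ {p : (SimpleGraph.cycleGraph n).Walk v v | p.IsCycle},
        (p.edges.map f).prod) =
    (∑ e ∈ (SimpleGraph.cycleGraph n).edgeFinset, f e ^ 2) +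
      2 * ∏ e ∈ (SimpleGraph.cycleGraph n).edgeFinset, f e := by
  haveI : NeZero n := ⟨by omega⟩
  congr 1
  set c1 : (SimpleGraph.cycleGraph n).Walk v v := (wlk n hn 1 (Or.inl rfl) n v).copy rfl (by simp) with hc1
  set c2 : (SimpleGraph.cycleGraph n).Walk v v := (wlk n hn (-1) (Or.inr rfl) n v).copy rfl (by simp) with hc2
  have hset : {p : (SimpleGraph.cycleGraph n).Walk v v | p.IsCycle} = {c1, c2} := by
    ext p
    constructor
    · intro hp
      obtain ⟨d, hd, rfl⟩ := cycle_classify hn hp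
      rcases hd with rfl | rfl
      · left; rfl
      · right; rfl
    · intro hp
      rcases hp with rfl | rfl
      · exact wlk_isCycle hn _ v
      · exact wlk_isCycle hn _ v
  have hne : c1 ≠ c2 := by
    intro h
    have h1 := congrArg (fun p => Walk.getVert p 1) h
    simp only [hc1, hc2, Walk.getVert_copy, getVert_wlk] at h1
    rw [Nat.min_eq_left (by omega)] at h1
    apply two_ne_zero_fin hn
    push_cast at h1
    linear_combination h1
  have hprod : ∀ (d : Fin n) (hd : d = 1 ∨ d = -1),
      (((((wlk n hn d hd n v).copy rfl (by simp) : (SimpleGraph.cycleGraph n).Walk v v)).edges.map f)).prod =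
        ∏ e ∈ (SimpleGraph.cycleGraph n).edgeFinset, f e := by
    intro d hd
    rw [Walk.edges_copy, edges_wlk hn hd, List.map_map, list_prod_range]
    exact prod_edges hn hd v f
  rw [hset, finsum_mem_pair hne, hprod 1 (Or.inl rfl), hprod (-1) (Or.inr rfl), two_mul]
end

section
/- (Torus link formula, cycle-graph component.) Let k ≥ 3, let R be a commutative ring, let w ∈ R, and let v be any vertex of the cycle graph C_k. If every edge of C_k is given weight w, then the cycle-sum Σ_{e ∈ edgeFinset} w² + Σ_{p cycle based at v} Π_{e ∈ p.edges} w equals k·w² + 2·w^k. This is the unshaded checkerboard component of the paper's formula WRP(T(2,k)) = {w^{2k}, 2w^k + k·w²} for the positive (2,k) torus link. -/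
namespace CycleSumAux

open SimpleGraph Walk

open scoped Fin.CommRing

variable {m : ℕ}

abbrev K (m : ℕ) : ℕ := m + 3

/-- All darts step `+1`. -/
def Asc {a b : Fin (m+3)} (p : (cycleGraph (m+3)).Walk a b) : Prop :=
  ∀ d ∈ p.darts, d.toProd.2 = d.toProd.1 + 1

/-- All darts step `-1`. -/
def Desc {a b : Fin (m+3)} (p : (cycleGraph (m+3)).Walk a b) : Prop :=
  ∀ d ∈ p.darts, d.toProd.2 = d.toProd.1 - 1

lemma adj_iff {u w : Fin (m+3)} :
    (cycleGraph (m+3)).Adj u w ↔ w = u + 1 ∨ w = u - 1 := by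
  rw [show m + 3 = (m+1) + 2 by ring] at *
  rw [SimpleGraph.cycleGraph_adj]
  constructor
  · rintro (h | h)
    · right; rw [← h, sub_sub_cancel]
    · left; rw [← h]; ring
  · rintro (rfl | rfl)
    · right; rw [add_sub_cancel_left]
    · left; rw [sub_sub_cancel]

lemma two_ne_zero' : (2 : Fin (m+3)) ≠ 0 := by
  intro h
  have h2 : ((2 : ℕ) : Fin (m+3)) = 0 := by push_cast; exact h
  rw [Fin.natCast_eq_zero] at h2
  have := Nat.le_of_dvd (by norm_num) h2
  omega

lemma add_one_ne_sub_one (u : Fin (m+3)) : u + 1 ≠ u - 1 := by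
  intro h
  exact two_ne_zero' (by linear_combination h)

lemma adj_succ (u : Fin (m+3)) : (cycleGraph (m+3)).Adj u (u+1) :=
  adj_iff.mpr (Or.inl rfl)

/-- The ascending walk of `n` steps starting at `u`. -/
def ascWalk (m : ℕ) : (n : ℕ) → (u : Fin (m+3)) → (cycleGraph (m+3)).Walk u (u + n)
  | 0, u => Walk.nil.copy rfl (by simp)
  | n+1, u => (Walk.cons (adj_succ u) (ascWalk m n (u+1))).copy rfl
      (by push_cast; ring)

@[simp] lemma ascWalk_length (n : ℕ) (u : Fin (m+3)) : (ascWalk m n u).length = n := by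
  induction n generalizing u with
  | zero => simp [ascWalk]
  | succ n ih => simp [ascWalk, ih]

lemma ascWalk_asc (n : ℕ) (u : Fin (m+3)) : Asc (ascWalk m n u) := by
  induction n generalizing u with
  | zero => intro d hd; simp [ascWalk] at hd
  | succ n ih =>
    intro d hd
    simp only [ascWalk, darts_copy, darts_cons, List.mem_cons] at hd
    rcases hd with rfl | hd
    · rfl
    · exact ih (u+1) d hd

lemma ascWalk_support (n : ℕ) (u : Fin (m+3)) :
    (ascWalk m n u).support = (List.range (n+1)).map (fun i : ℕ => u + (i : Fin (m+3))) := by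
  induction n generalizing u with
  | zero => simp [ascWalk, List.range_succ]
  | succ n ih =>
    rw [show n + 1 + 1 = (n+1) + 1 from rfl, List.range_succ_eq_map]
    simp only [ascWalk, support_copy, support_cons, ih, List.map_cons, List.map_map]
    congr 1
    · simp
    · apply List.map_congr_left
      intro i _
      simp only [Function.comp_apply]
      push_cast
      ring

lemma ascWalk_edges (n : ℕ) (u : Fin (m+3)) :
    (ascWalk m n u).edges = (List.range n).map (fun i : ℕ => s(u + (i : Fin (m+3)), u + i + 1)) := by
  induction n generalizing u with
  | zero => simp [ascWalk]
  | succ n ih =>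
    rw [List.range_succ_eq_map]
    simp only [ascWalk, edges_copy, edges_cons, ih, List.map_cons, List.map_map]
    congr 1
    · simp
    · apply List.map_congr_left
      intro i _
      simp only [Function.comp_apply]
      congr 1 <;> (push_cast; ring)

lemma natCast_inj_of_lt {i j : ℕ} (hi : i < m+3) (hj : j < m+3)
    (h : (i : Fin (m+3)) = j) : i = j := by
  have := congrArg Fin.val h
  rwa [Fin.val_cast_of_lt hi, Fin.val_cast_of_lt hj] at this

lemma add_natCast_inj {u : Fin (m+3)} {i j : ℕ} (hi : i < m+3) (hj : j < m+3)
    (h : u + (i : Fin (m+3)) = u + j) : i = j :=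
  natCast_inj_of_lt hi hj (by exact add_left_cancel h)

/-- The ascending closed walk at `v`, our first cycle. -/
def cPlus (m : ℕ) (v : Fin (m+3)) : (cycleGraph (m+3)).Walk v v :=
  (ascWalk m (m+3) v).copy rfl (by simp)

@[simp] lemma cPlus_length (v : Fin (m+3)) : (cPlus m v).length = m + 3 := by
  simp [cPlus]

lemma cPlus_asc (v : Fin (m+3)) : Asc (cPlus m v) := by
  intro d hd
  rw [cPlus, darts_copy] at hd
  exact ascWalk_asc _ _ d hd

lemma cPlus_isCycle (v : Fin (m+3)) : (cPlus m v).IsCycle := by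
  rw [isCycle_def]
  refine ⟨⟨?_⟩, ?_, ?_⟩
  · -- edges nodup
    rw [cPlus, edges_copy, ascWalk_edges]
    refine List.Nodup.map_on ?_ List.nodup_range
    intro i hi j hj hij
    rw [List.mem_range] at hi hj
    rw [Sym2.eq_iff] at hij
    rcases hij with ⟨h1, _⟩ | ⟨h1, h2⟩
    · exact add_natCast_inj hi hj h1
    · exfalso
      -- v + i = v + j + 1  and  v + i + 1 = v + j
      have : (2 : Fin (m+3)) = 0 := by linear_combination h2 - h1
      exact two_ne_zero' this
  · intro h
    have := congrArg Walk.length h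
    simp at this
  · rw [cPlus, support_copy, ascWalk_support, List.range_succ_eq_map]
    simp only [List.map_cons, List.tail_cons, List.map_map]
    refine List.Nodup.map_on ?_ List.nodup_range
    intro i hi j hj hij
    rw [List.mem_range] at hi hj
    simp only [Function.comp_apply] at hij
    have h' : v + ((i+1 : ℕ) : Fin (m+3)) = v + ((j+1 : ℕ) : Fin (m+3)) := by
      push_cast at hij ⊢; exact hij
    have h9 := congrArg Fin.val (add_left_cancel h')
    rw [Fin.val_natCast, Fin.val_natCast] at h9
    have h10 : i % (m+3) = j % (m+3) := Nat.ModEq.add_right_cancel' 1 h9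
    rwa [Nat.mod_eq_of_lt hi, Nat.mod_eq_of_lt hj] at h10

lemma desc_reverse_asc {a b : Fin (m+3)} {p : (cycleGraph (m+3)).Walk a b}
    (h : Desc p) : Asc p.reverse := by
  intro d hd
  rw [darts_reverse, List.mem_reverse, List.mem_map] at hd
  obtain ⟨d', hd', rfl⟩ := hd
  have := h d' hd'
  simp only [Dart.symm_toProd, Prod.snd_swap, Prod.fst_swap]
  rw [this]; ring

lemma asc_reverse_desc {a b : Fin (m+3)} {p : (cycleGraph (m+3)).Walk a b}
    (h : Asc p) : Desc p.reverse := by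
  intro d hd
  rw [darts_reverse, List.mem_reverse, List.mem_map] at hd
  obtain ⟨d', hd', rfl⟩ := hd
  have := h d' hd'
  simp only [Dart.symm_toProd, Prod.snd_swap, Prod.fst_swap]
  rw [this]; ring

/-- Path dichotomy: every path in the cycle graph is monotone. -/
lemma path_asc_or_desc {a b : Fin (m+3)} (p : (cycleGraph (m+3)).Walk a b)
    (hp : p.IsPath) : Asc p ∨ Desc p := by
  induction p with
  | nil => left; intro d hd; simp at hd
  | @cons a c b h q ih =>
    rw [cons_isPath_iff] at hp
    obtain ⟨hq, ha⟩ := hp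
    rcases ih hq with hasc | hdesc
    · rcases adj_iff.mp h with rfl | rfl
      · -- c = a + 1, Asc q : Asc whole
        left
        intro d hd
        rw [darts_cons, List.mem_cons] at hd
        rcases hd with rfl | hd
        · rfl
        · exact hasc d hd
      · -- c = a - 1, Asc q : q's first step returns to a
        cases q with
        | nil =>
          right
          intro d hd
          rw [darts_cons, List.mem_cons] at hd
          rcases hd with rfl | hd
          · rfl
          · simp at hd
        | @cons _ x _ h2 q2 =>
          exfalso
          have hx : x = a - 1 + 1 := hasc ⟨(a - 1, x), h2⟩ (by rw [darts_cons]; exact List.mem_cons_self)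
          rw [sub_add_cancel] at hx
          subst hx
          exact ha (by rw [support_cons]; right; exact start_mem_support q2)
    · rcases adj_iff.mp h with rfl | rfl
      · -- c = a + 1, Desc q
        cases q with
        | nil =>
          left
          intro d hd
          rw [darts_cons, List.mem_cons] at hd
          rcases hd with rfl | hd
          · rfl
          · simp at hd
        | @cons _ x _ h2 q2 =>
          exfalso
          have hx : x = a + 1 - 1 := hdesc ⟨(a + 1, x), h2⟩ (by rw [darts_cons]; exact List.mem_cons_self)
          rw [add_sub_cancel_right] at hx
          subst hx
          exact ha (by rw [support_cons]; right; exact start_mem_support q2)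
      · right
        intro d hd
        rw [darts_cons, List.mem_cons] at hd
        rcases hd with rfl | hd
        · rfl
        · exact hdesc d hd

lemma asc_endpoint {a b : Fin (m+3)} (p : (cycleGraph (m+3)).Walk a b)
    (h : Asc p) : b = a + (p.length : Fin (m+3)) := by
  induction p with
  | nil => simp
  | @cons a c b hadj q ih =>
    have hc : c = a + 1 := h ⟨(a, c), hadj⟩ (by rw [darts_cons]; exact List.mem_cons_self)
    have hq : Asc q := fun d hd => h d (by rw [darts_cons]; exact List.mem_cons_of_mem _ hd)
    subst hc
    refine (ih hq).trans ?_
    rw [length_cons]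
    push_cast
    ring

/-- Uniqueness of the ascending walk with given endpoints and length. -/
lemma asc_unique {a b : Fin (m+3)} (p : (cycleGraph (m+3)).Walk a b) (hp : Asc p) :
    ∀ q : (cycleGraph (m+3)).Walk a b, Asc q → q.length = p.length → q = p := by
  induction p with
  | nil =>
    intro q _ hlen
    rw [length_nil, length_eq_zero_iff] at hlen
    exact nil_iff_eq_nil.mp hlen
  | @cons a c b hadj p' ih =>
    intro q hq hlen
    have hc : c = a + 1 := hp ⟨(a, c), hadj⟩ (by rw [darts_cons]; exact List.mem_cons_self)
    have hp' : Asc p' := fun d hd => hp d (by rw [darts_cons]; exact List.mem_cons_of_mem _ hd)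
    cases q with
    | nil => simp at hlen
    | @cons _ x _ h2 q2 =>
      have hx : x = a + 1 := hq ⟨(a, x), h2⟩ (by rw [darts_cons]; exact List.mem_cons_self)
      have hq2 : Asc q2 := fun d hd => hq d (by rw [darts_cons]; exact List.mem_cons_of_mem _ hd)
      subst hc
      subst hx
      have hlen2 : q2.length = p'.length := by
        simp only [length_cons] at hlen; omega
      rw [ih hp' q2 hq2 hlen2]

/-- Reverse of a cycle is a cycle (not in this Mathlib version). -/
lemma IsCycle.reverse' {V : Type} {G : SimpleGraph V} {v : V} {p : G.Walk v v}
    (h : p.IsCycle) : p.reverse.IsCycle := by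
  rw [isCycle_def] at h ⊢
  obtain ⟨ht, hne, hnd⟩ := h
  refine ⟨ht.reverse p, ?_, ?_⟩
  · intro hn
    apply hne
    have := congrArg Walk.reverse hn
    rwa [reverse_reverse, reverse_nil] at this
  · rw [support_reverse]
    set t := p.support.reverse.tail with ht'
    have h1 : p.support.reverse = v :: t := by
      rw [ht']
      have := support_eq_cons p.reverse
      rwa [support_reverse] at this
    have key : t.reverse ++ [v] = v :: p.support.tail := by
      calc t.reverse ++ [v] = (v :: t).reverse := by simp
        _ = p.support.reverse.reverse := by rw [← h1]
        _ = p.support := by rw [List.reverse_reverse]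
        _ = v :: p.support.tail := support_eq_cons p
    rcases ht2 : t.reverse with _ | ⟨x, l⟩
    · have h3 : t = [] := by simpa using congrArg List.reverse ht2
      rw [h3]; exact List.nodup_nil
    · rw [ht2] at key
      have hx : x = v := by
        have h4 := congrArg List.head? key
        simp only [List.cons_append, List.head?_cons, Option.some.injEq] at h4
        exact h4
      rw [hx] at key ht2
      have hl : p.support.tail = l ++ [v] := by
        have h5 := congrArg List.tail key
        simpa using h5.symm
      rw [hl] at hnd
      have h6 : (v :: l).Nodup := (List.perm_append_singleton v l).nodup_iff.mp hnd
      have hrev : t.reverse.Nodup := by rw [ht2]; exact h6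
      exact List.nodup_reverse.mp hrev

lemma asc_cycle_length {v : Fin (m+3)} (p : (cycleGraph (m+3)).Walk v v)
    (hc : p.IsCycle) (ha : Asc p) : p.length = m + 3 := by
  have h1 : v = v + (p.length : Fin (m+3)) := asc_endpoint p ha
  have h2 : ((p.length : ℕ) : Fin (m+3)) = 0 := by
    have := h1.symm
    rwa [add_eq_left] at this
  rw [Fin.natCast_eq_zero] at h2
  have hle : p.length ≤ m + 3 := by
    have := hc.support_nodup.length_le_card
    have hsl : p.support.tail.length = p.length := by
      have := length_support p
      simp [List.length_tail, this]
    rw [hsl, Fintype.card_fin] at this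
    exact this
  have hpos : 0 < p.length := by
    have := hc.three_le_length
    omega
  exact Nat.le_antisymm hle (Nat.le_of_dvd hpos h2)

lemma asc_cycle_eq {v : Fin (m+3)} (p : (cycleGraph (m+3)).Walk v v)
    (hc : p.IsCycle) (ha : Asc p) : p = cPlus m v := by
  apply asc_unique (cPlus m v) (cPlus_asc v) p ha
  rw [asc_cycle_length p hc ha, cPlus_length]

lemma cycle_set_eq (v : Fin (m+3)) :
    {p : (cycleGraph (m+3)).Walk v v | p.IsCycle} = {cPlus m v, (cPlus m v).reverse} := by
  ext p
  simp only [Set.mem_setOf_eq, Set.mem_insert_iff, Set.mem_singleton_iff]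
  constructor
  · intro hc
    have hAD : Asc p ∨ Desc p := by
      cases p with
      | nil => exact absurd rfl hc.ne_nil
      | @cons _ c _ h q =>
        have hq : q.IsPath := ((cons_isCycle_iff q h).mp hc).1
        have hlen3 : 3 ≤ (Walk.cons h q).length := hc.three_le_length
        rcases path_asc_or_desc q hq with hasc | hdesc
        · rcases adj_iff.mp h with rfl | rfl
          · left
            intro d hd
            rw [darts_cons, List.mem_cons] at hd
            rcases hd with rfl | hd
            · rfl
            · exact hasc d hd
          · -- first step v → v - 1, rest ascending from v - 1 back to v
            exfalso
            have he := asc_endpoint q hasc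
            -- v = (v - 1) + q.length
            have h1 : ((q.length : ℕ) : Fin (m+3)) = 1 := by linear_combination - he
            have hql : q.length < m + 3 := by
              have := hq.support_nodup.length_le_card
              rw [length_support, Fintype.card_fin] at this
              omega
            have : q.length = 1 := by
              have := congrArg Fin.val h1
              rwa [Fin.val_cast_of_lt hql, Fin.val_one] at this
            rw [length_cons, this] at hlen3
            omega
        · rcases adj_iff.mp h with rfl | rfl
          · exfalso
            have hasc' : Asc q.reverse := desc_reverse_asc hdesc
            have he := asc_endpoint q.reverse hasc'
            -- v + 1 = v + q.length
            rw [length_reverse] at he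
            have h1 : ((q.length : ℕ) : Fin (m+3)) = 1 := by linear_combination - he
            have hql : q.length < m + 3 := by
              have := hq.support_nodup.length_le_card
              rw [length_support, Fintype.card_fin] at this
              omega
            have : q.length = 1 := by
              have := congrArg Fin.val h1
              rwa [Fin.val_cast_of_lt hql, Fin.val_one] at this
            rw [length_cons, this] at hlen3
            omega
          · right
            intro d hd
            rw [darts_cons, List.mem_cons] at hd
            rcases hd with rfl | hd
            · rfl
            · exact hdesc d hd
    rcases hAD with ha | hd
    · left; exact asc_cycle_eq p hc ha
    · right
      have h1 : p.reverse = cPlus m v :=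
        asc_cycle_eq p.reverse (IsCycle.reverse' hc) (desc_reverse_asc hd)
      rw [← h1, reverse_reverse]
  · rintro (rfl | rfl)
    · exact cPlus_isCycle v
    · exact IsCycle.reverse' (cPlus_isCycle v)

lemma cPlus_ne_reverse (v : Fin (m+3)) : cPlus m v ≠ (cPlus m v).reverse := by
  intro h
  have ha : Asc (cPlus m v) := cPlus_asc v
  have hd : Desc (cPlus m v) := by rw [h]; exact asc_reverse_desc ha
  have hne : (cPlus m v).darts ≠ [] := by
    intro hn
    have := congrArg List.length hn
    rw [length_darts, cPlus_length] at this
    simp at this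
  have hmem := List.head_mem hne
  set d := (cPlus m v).darts.head hne
  have h1 := ha d hmem
  have h2 := hd d hmem
  rw [h1] at h2
  exact add_one_ne_sub_one _ h2

lemma edgeFinset_card : (cycleGraph (m+3)).edgeFinset.card = m + 3 := by
  have h := SimpleGraph.sum_degrees_eq_twice_card_edges (cycleGraph (m+3))
  have h2 : ∑ v : Fin (m+3), (cycleGraph (m+3)).degree v = (m+3) * 2 := by
    rw [Finset.sum_congr rfl (fun v _ => cycleGraph_degree_three_le)]
    simp [Finset.sum_const, Finset.card_univ, mul_comm]
  rw [h2] at h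
  omega

end CycleSumAux

/-- Torus link formula, cycle-graph component: if every edge of `C_k` (`k ≥ 3`) has
weight `w`, the cycle-sum at any vertex equals `k·w² + 2·w^k`. -/
theorem cycleGraph_cycleSum_const (k : ℕ) (hk : 3 ≤ k) (R : Type) [CommRing R]
    (w : R) (v : Fin k) :
    (∑ _e ∈ (SimpleGraph.cycleGraph k).edgeFinset, w ^ 2) +
      (∑ᶠ p ∈ {p : (SimpleGraph.cycleGraph k).Walk v v | p.IsCycle},
        (p.edges.map (fun _ => w)).prod) =
    (k : R) * w ^ 2 + 2 * w ^ k := by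
  obtain ⟨m, rfl⟩ : ∃ m, k = m + 3 := ⟨k - 3, by omega⟩
  rw [Finset.sum_const, CycleSumAux.edgeFinset_card, CycleSumAux.cycle_set_eq v,
    finsum_mem_pair (CycleSumAux.cPlus_ne_reverse v)]
  have hprod : ∀ p : (SimpleGraph.cycleGraph (m+3)).Walk v v,
      (p.edges.map (fun _ => w)).prod = w ^ p.length := by
    intro p
    rw [List.map_const', List.prod_replicate, SimpleGraph.Walk.length_edges]
  rw [hprod, hprod, SimpleGraph.Walk.length_reverse, CycleSumAux.cPlus_length]
  push_cast
  ring
end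

section
/- (Twist knot formula, triangle component.) Let k ≥ 4 be an integer, let R be a commutative ring, and let w ∈ R. If the three edges of the cycle graph C_3 carry weights w^{k−2}, w, w, then for any vertex v of C_3 the cycle-sum Σ_{e ∈ edgeFinset} f(e)² + Σ_{p cycle based at v} Π_{e ∈ p.edges} f(e) equals w^{2k−4} + 2·w^k + 2·w². This is one component of the paper's formula WRP(T_k) = {2w^k + w⁴ + (k−2)w², w^{2k−4} + 2w^k + 2w²} for the positive twist knot T_k with k crossings. -/
open SimpleGraph Walk

private lemma adjT {a b : Fin 3} (h : a ≠ b) : (⊤ : SimpleGraph (Fin 3)).Adj a b := h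

private lemma adj1 (v : Fin 3) : (⊤ : SimpleGraph (Fin 3)).Adj v (v + 1) :=
  adjT (by revert v; decide)
private lemma adj2 (v : Fin 3) : (⊤ : SimpleGraph (Fin 3)).Adj v (v + 2) :=
  adjT (by revert v; decide)
private lemma adj12 (v : Fin 3) : (⊤ : SimpleGraph (Fin 3)).Adj (v + 1) (v + 2) :=
  adjT (by revert v; decide)
private lemma adj21 (v : Fin 3) : (⊤ : SimpleGraph (Fin 3)).Adj (v + 2) (v + 1) :=
  adjT (by revert v; decide)
private lemma adj1v (v : Fin 3) : (⊤ : SimpleGraph (Fin 3)).Adj (v + 1) v :=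
  adjT (by revert v; decide)
private lemma adj2v (v : Fin 3) : (⊤ : SimpleGraph (Fin 3)).Adj (v + 2) v :=
  adjT (by revert v; decide)

private def c1 (v : Fin 3) : (⊤ : SimpleGraph (Fin 3)).Walk v v :=
  .cons (adj1 v) (.cons (adj12 v) (.cons (adj2v v) .nil))

private def c2 (v : Fin 3) : (⊤ : SimpleGraph (Fin 3)).Walk v v :=
  .cons (adj2 v) (.cons (adj21 v) (.cons (adj1v v) .nil))

private lemma fin3_cases (v a b : Fin 3) (hav : a ≠ v) (hbv : b ≠ v) (hab : a ≠ b) :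
    (a = v + 1 ∧ b = v + 2) ∨ (a = v + 2 ∧ b = v + 1) := by revert v a b; decide

private lemma cycles_eq (v : Fin 3) :
    {p : (⊤ : SimpleGraph (Fin 3)).Walk v v | p.IsCycle} = {c1 v, c2 v} := by
  ext p
  simp only [Set.mem_setOf_eq, Set.mem_insert_iff, Set.mem_singleton_iff]
  constructor
  · intro hp
    have hlen := hp.three_le_length
    have hnd := hp.2
    cases p with
    | nil => simp at hlen
    | cons h1 q =>
      cases q with
      | nil => simp at hlen
      | cons h2 q =>
        cases q with
        | nil => simp at hlen
        | cons h3 q =>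
          cases q with
          | nil =>
            rename_i a b
            simp only [Walk.support_cons, Walk.support_nil, List.tail_cons,
              List.nodup_cons, List.mem_cons, List.mem_singleton, List.not_mem_nil,
              List.nodup_nil, and_true, not_or] at hnd
            obtain ⟨⟨hab, hav, -⟩, ⟨hbv, -⟩, -⟩ := hnd
            rcases fin3_cases v a b hav hbv hab with ⟨rfl, rfl⟩ | ⟨rfl, rfl⟩
            · left; rfl
            · right; rfl
          | cons h4 q =>
            exfalso
            have hle := List.Nodup.length_le_card hnd
            simp [Walk.length_support] at hle
            omega
  · rintro (rfl | rfl) <;>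
    · rw [Walk.isCycle_def]
      refine ⟨?_, by simp [c1, c2], ?_⟩
      · constructor
        simp only [c1, c2, Walk.edges_cons, Walk.edges_nil]
        revert v; decide
      · simp only [c1, c2, Walk.support_cons, Walk.support_nil, List.tail_cons]
        revert v; decide
private lemma c1_edges (v : Fin 3) :
    ((c1 v).edges : Multiset (Sym2 (Fin 3))) = {s(0, 1), s(1, 2), s(0, 2)} := by
  revert v; decide

private lemma c2_edges (v : Fin 3) :
    ((c2 v).edges : Multiset (Sym2 (Fin 3))) = {s(0, 1), s(1, 2), s(0, 2)} := by
  revert v; decide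

/-- Twist knot formula, triangle component: if the three edges of `C_3` carry weights
`w^(k-2), w, w` (for `k ≥ 4`), then the cycle-sum at any vertex equals
`w^(2k-4) + 2w^k + 2w²`. -/
theorem twistKnot_triangle_cycleSum (k : ℕ) (hk : 4 ≤ k) (R : Type) [CommRing R]
    (w : R) (f : Sym2 (Fin 3) → R)
    (h01 : f s(0, 1) = w ^ (k - 2)) (h12 : f s(1, 2) = w) (h02 : f s(0, 2) = w)
    (v : Fin 3) :
    (∑ e ∈ (SimpleGraph.cycleGraph 3).edgeFinset, f e ^ 2) +
      (∑ᶠ p ∈ {p : (SimpleGraph.cycleGraph 3).Walk v v | p.IsCycle},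
        (p.edges.map f).prod) =
    w ^ (2 * k - 4) + 2 * w ^ k + 2 * w ^ 2 := by
  obtain ⟨m, rfl⟩ : ∃ m, k = m + 2 := ⟨k - 2, by omega⟩
  have hedge : (SimpleGraph.cycleGraph 3).edgeFinset =
      ({s(0, 1), s(1, 2), s(0, 2)} : Finset (Sym2 (Fin 3))) := by decide
  have hne : c1 v ≠ c2 v := by
    intro h
    have h' := congrArg Walk.support h
    simp only [c1, c2, Walk.support_cons, Walk.support_nil] at h'
    exact absurd h' (by revert v; decide)
  rw [hedge, SimpleGraph.cycleGraph_three_eq_top, cycles_eq, finsum_mem_pair hne]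
  have key : ∀ p : (⊤ : SimpleGraph (Fin 3)).Walk v v,
      (p.edges : Multiset (Sym2 (Fin 3))) = {s(0, 1), s(1, 2), s(0, 2)} →
      (p.edges.map f).prod = f s(0, 1) * f s(1, 2) * f s(0, 2) := by
    intro p hp
    have : ((p.edges : Multiset (Sym2 (Fin 3))).map f).prod = (p.edges.map f).prod := by
      rw [Multiset.map_coe, Multiset.prod_coe]
    rw [← this, hp]
    simp [Multiset.prod_cons, mul_assoc]
  rw [key _ (c1_edges v), key _ (c2_edges v)]
  rw [Finset.sum_insert (by decide), Finset.sum_insert (by decide),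
    Finset.sum_singleton]
  rw [h01, h12, h02, show m + 2 - 2 = m from by omega, show 2 * (m + 2) - 4 = 2 * m from by omega]
  ring
end

section
/- (Twist knot formula, long-cycle component.) Let k ≥ 4 be an integer, let R be a commutative ring, and let w ∈ R. Consider the cycle graph C_{k−1} with a weight function assigning w² to one distinguished edge and w to each of the remaining k−2 edges. Then for any vertex v of C_{k−1} the cycle-sum Σ_{e ∈ edgeFinset} f(e)² + Σ_{p cycle based at v} Π_{e ∈ p.edges} f(e) equals w⁴ + (k−2)·w² + 2·w^k. This is the other component of the paper's formula WRP(T_k) = {2w^k + w⁴ + (k−2)w², w^{2k−4} + 2w^k + 2w²} for the positive twist knot T_k with k crossings. -/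
open SimpleGraph List
open Fin.CommRing

namespace TwistAux

variable {n : ℕ}

lemma two_ne_zero' : (2 : Fin (n+3)) ≠ 0 := by
  intro h
  have h2 : ((2:ℕ) : Fin (n+3)) = 0 := by exact_mod_cast h
  rw [Fin.natCast_eq_zero] at h2
  have := Nat.le_of_dvd (by norm_num) h2
  omega

/-- casts of naturals in `[1, n+3]` into `Fin (n+3)` are injective. -/
lemma cast_inj' {a b : ℕ} (ha1 : 1 ≤ a) (ha : a ≤ n + 3) (hb1 : 1 ≤ b) (hb : b ≤ n + 3)
    (h : (a : Fin (n+3)) = (b : Fin (n+3))) : a = b := by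
  have h' := congrArg Fin.val h
  rw [Fin.val_natCast, Fin.val_natCast] at h'
  rcases eq_or_lt_of_le ha with h1 | h1 <;> rcases eq_or_lt_of_le hb with h2 | h2 <;>
    simp_all [Nat.mod_eq_of_lt, Nat.mod_self] <;> omega

lemma cast_lt_inj {a b : ℕ} (ha : a < n + 3) (hb : b < n + 3)
    (h : (a : Fin (n+3)) = (b : Fin (n+3))) : a = b := by
  have h' := congrArg Fin.val h
  rwa [Fin.val_natCast, Fin.val_natCast, Nat.mod_eq_of_lt ha, Nat.mod_eq_of_lt hb] at h'

lemma adj_up (u : Fin (n+3)) : (cycleGraph (n+3)).Adj u (u + 1) := by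
  rw [cycleGraph_adj']
  right
  rw [add_sub_cancel_left]
  simp

/-- Walks are determined by their supports. -/
lemma walk_eq_of_support_eq {V : Type*} {G : SimpleGraph V} :
    ∀ {u x : V} (p q : G.Walk u x), p.support = q.support → p = q := by
  intro u x p
  induction p with
  | nil =>
    intro q hq
    cases q with
    | nil => rfl
    | cons h q => simpa using congrArg List.length hq
  | cons h p ih =>
    intro q hq
    cases q with
    | nil => simpa using congrArg List.length hq
    | cons h' q' =>
      simp only [SimpleGraph.Walk.support_cons, List.cons.injEq, true_and] at hq
      have hb := congrArg List.head? hq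
      rw [SimpleGraph.Walk.support_eq_cons p, SimpleGraph.Walk.support_eq_cons q'] at hb
      simp only [List.head?_cons, Option.some.injEq] at hb
      subst hb
      rw [ih q' hq]

lemma support_eq_map_getVert {V : Type*} {G : SimpleGraph V} :
    ∀ {u x : V} (p : G.Walk u x), p.support = (List.range (p.length + 1)).map p.getVert := by
  intro u x p
  induction p with
  | nil => simp [SimpleGraph.Walk.getVert, List.range_succ]
  | cons h p ih =>
    rw [SimpleGraph.Walk.support_cons, SimpleGraph.Walk.length_cons, ih]
    conv_rhs => rw [List.range_succ_eq_map]
    rw [List.map_cons, List.map_map]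
    rfl

/-- the canonical ascending walk of length `L` from `u`. -/
def upw (n : ℕ) : (L : ℕ) → (u : Fin (n+3)) → (cycleGraph (n+3)).Walk u (u + L)
  | 0, u => SimpleGraph.Walk.nil.copy rfl (by simp)
  | (L+1), u => ((upw n L (u+1)).cons (adj_up u)).copy rfl (by push_cast; ring)

@[simp] lemma upw_length (L : ℕ) (u : Fin (n+3)) : (upw n L u).length = L := by
  induction L generalizing u with
  | zero => simp [upw]
  | succ L ih => simp [upw, ih]

lemma upw_support (L : ℕ) (u : Fin (n+3)) :
    (upw n L u).support = (List.range (L + 1)).map (fun i : ℕ => u + (i : Fin (n+3))) := by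
  induction L generalizing u with
  | zero => simp [upw, List.range_succ]
  | succ L ih =>
    have hr : (List.range (L+1+1)).map (fun i : ℕ => u + (i : Fin (n+3)))
        = u :: (List.range (L+1)).map (fun i : ℕ => (u+1) + (i : Fin (n+3))) := by
      rw [List.range_succ_eq_map, List.map_cons, List.map_map]
      simp only [Nat.cast_zero, add_zero, List.cons.injEq, true_and]
      refine List.map_congr_left fun i _ => ?_
      simp only [Function.comp_apply, Nat.succ_eq_add_one]
      push_cast
      ring
    rw [upw, SimpleGraph.Walk.support_copy, SimpleGraph.Walk.support_cons, ih, hr]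

lemma upw_edges (L : ℕ) (u : Fin (n+3)) :
    (upw n L u).edges =
      (List.range L).map (fun i : ℕ => s(u + (i : Fin (n+3)), u + (i : Fin (n+3)) + 1)) := by
  induction L generalizing u with
  | zero => simp [upw]
  | succ L ih =>
    have hr : (List.range (L+1)).map
          (fun i : ℕ => s(u + (i : Fin (n+3)), u + (i : Fin (n+3)) + 1))
        = s(u, u + 1) :: (List.range L).map
            (fun i : ℕ => s((u+1) + (i : Fin (n+3)), (u+1) + (i : Fin (n+3)) + 1)) := by
      rw [List.range_succ_eq_map, List.map_cons, List.map_map]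
      simp only [Nat.cast_zero, add_zero, List.cons.injEq, true_and]
      refine List.map_congr_left fun i _ => ?_
      simp only [Function.comp_apply, Nat.succ_eq_add_one]
      have h1 : u + (((i:ℕ) + 1 : ℕ) : Fin (n+3)) = (u+1) + (i : Fin (n+3)) := by
        push_cast; ring
      rw [h1]
    rw [upw, SimpleGraph.Walk.edges_copy, SimpleGraph.Walk.edges_cons, ih, hr]

/-- the canonical cycle based at `v`. -/
def cyc (n : ℕ) (v : Fin (n+3)) : (cycleGraph (n+3)).Walk v v :=
  (upw n (n+3) v).copy rfl (by simp)

lemma cyc_support (v : Fin (n+3)) :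
    (cyc n v).support = (List.range (n+4)).map (fun i : ℕ => v + (i : Fin (n+3))) := by
  rw [cyc, SimpleGraph.Walk.support_copy, upw_support]

lemma cyc_edges (v : Fin (n+3)) :
    (cyc n v).edges
      = (List.range (n+3)).map (fun i : ℕ => s(v + (i : Fin (n+3)), v + (i : Fin (n+3)) + 1)) := by
  rw [cyc, SimpleGraph.Walk.edges_copy, upw_edges]

@[simp] lemma cyc_length (v : Fin (n+3)) : (cyc n v).length = n + 3 := by
  rw [cyc, SimpleGraph.Walk.length_copy, upw_length]

lemma cast_succ_inj {i j : ℕ} (hi : i < n + 3) (hj : j < n + 3)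
    (h : ((i+1 : ℕ) : Fin (n+3)) = ((j+1 : ℕ) : Fin (n+3))) : i = j := by
  have := cast_inj' (n := n) (by omega) (by omega) (by omega) (by omega) h
  omega

lemma cyc_tail_nodup (v : Fin (n+3)) : (cyc n v).support.tail.Nodup := by
  rw [cyc_support, show n + 4 = (n+3)+1 from rfl, List.range_succ_eq_map, List.map_cons,
    List.map_map, List.tail_cons]
  refine List.Nodup.map_on ?_ List.nodup_range
  intro i hi j hj hij
  simp only [List.mem_range] at hi hj
  simp only [Function.comp_apply, Nat.succ_eq_add_one] at hij
  exact cast_succ_inj hi hj (add_left_cancel hij)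

lemma cyc_edges_nodup (v : Fin (n+3)) : (cyc n v).edges.Nodup := by
  rw [cyc_edges]
  refine List.Nodup.map_on ?_ List.nodup_range
  intro i hi j hj hij
  simp only [List.mem_range] at hi hj
  rw [Sym2.eq_iff] at hij
  rcases hij with ⟨h1, _⟩ | ⟨h1, h2⟩
  · exact cast_lt_inj hi hj (add_left_cancel h1)
  · exfalso
    have h3 : v + (i : Fin (n+3)) = v + (i : Fin (n+3)) + 2 := by
      nth_rewrite 1 [h1]
      rw [← h2]; ring
    have : (0 : Fin (n+3)) = 2 := by
      have := add_left_cancel (a := v + (i : Fin (n+3))) (b := (0:Fin (n+3))) (c := 2)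
      apply this
      rw [add_zero, ← h3]
    exact two_ne_zero' this.symm

lemma cyc_isCycle (v : Fin (n+3)) : (cyc n v).IsCycle := by
  rw [SimpleGraph.Walk.isCycle_def]
  refine ⟨⟨cyc_edges_nodup v⟩, ?_, cyc_tail_nodup v⟩
  intro h
  simpa using congrArg SimpleGraph.Walk.length h

lemma rev_support (v : Fin (n+3)) :
    (cyc n v).reverse.support = (List.range (n+4)).map (fun i : ℕ => v - (i : Fin (n+3))) := by
  rw [SimpleGraph.Walk.support_reverse, cyc_support]
  apply List.ext_getElem
  · simp
  · intro i h1 h2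
    simp only [List.length_reverse, List.length_map, List.length_range] at h1 h2
    rw [List.getElem_reverse]
    simp only [List.getElem_map, List.getElem_range, List.length_map, List.length_range]
    have hle : i ≤ n + 3 := by omega
    have key : ((n + 4 - 1 - i : ℕ) : Fin (n+3)) = -(i : Fin (n+3)) := by
      apply eq_neg_of_add_eq_zero_left
      have : ((n + 4 - 1 - i : ℕ) : Fin (n+3)) + (i : Fin (n+3)) = ((n+3 : ℕ) : Fin (n+3)) := by
        rw [← Nat.cast_add]
        congr 1
        omega
      rw [this, Fin.natCast_self]
    rw [key, sub_eq_add_neg]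

lemma rev_isCycle (v : Fin (n+3)) : (cyc n v).reverse.IsCycle := by
  rw [SimpleGraph.Walk.isCycle_def]
  refine ⟨⟨?_⟩, ?_, ?_⟩
  · rw [SimpleGraph.Walk.edges_reverse, List.nodup_reverse]
    exact cyc_edges_nodup v
  · intro h
    simpa using congrArg SimpleGraph.Walk.length h
  · rw [rev_support, show n + 4 = (n+3)+1 from rfl, List.range_succ_eq_map, List.map_cons,
      List.map_map, List.tail_cons]
    refine List.Nodup.map_on ?_ List.nodup_range
    intro i hi j hj hij
    simp only [List.mem_range] at hi hj
    simp only [Function.comp_apply, Nat.succ_eq_add_one] at hij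
    exact cast_succ_inj hi hj (by have := sub_right_injective hij; exact this)

lemma cyc_getVert (v : Fin (n+3)) {i : ℕ} (hi : i < n + 4) :
    (cyc n v).getVert i = v + (i : Fin (n+3)) := by
  have h := (support_eq_map_getVert (cyc n v)).symm.trans (cyc_support v)
  rw [cyc_length] at h
  have h2 := congrArg (fun l => l[i]?) h
  simp only [List.getElem?_map, List.getElem?_range, hi, if_pos] at h2
  simpa using h2

lemma cyc_ne_rev (v : Fin (n+3)) : cyc n v ≠ (cyc n v).reverse := by
  intro h
  have h1 := congrArg (fun p => SimpleGraph.Walk.getVert p 1) h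
  simp only [SimpleGraph.Walk.getVert_reverse, cyc_length] at h1
  rw [cyc_getVert v (by omega), cyc_getVert v (by omega)] at h1
  have h2 : ((1:ℕ) : Fin (n+3)) + ((1:ℕ):Fin (n+3)) = ((n + 3 - 1 : ℕ) : Fin (n+3)) + ((1:ℕ):Fin (n+3)) := by
    rw [add_left_cancel h1]
  rw [← Nat.cast_add, ← Nat.cast_add] at h2
  have := cast_inj' (n := n) (by omega) (by omega) (by omega) (by omega) h2
  omega

lemma getVert_inj_of_cycle {V : Type*} {G : SimpleGraph V} {v : V} {p : G.Walk v v}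
    (hp : p.IsCycle) {i j : ℕ} (hi1 : 1 ≤ i) (hi : i ≤ p.length) (hj1 : 1 ≤ j)
    (hj : j ≤ p.length) (hij : p.getVert i = p.getVert j) : i = j := by
  have htail : p.support.tail = (List.range p.length).map (fun i => p.getVert (i+1)) := by
    rw [support_eq_map_getVert, List.range_succ_eq_map, List.map_cons, List.map_map,
      List.tail_cons]
    rfl
  have hnd := hp.support_nodup
  rw [htail] at hnd
  have h1 : i - 1 < ((List.range p.length).map (fun i => p.getVert (i+1))).length := by
    simp; omega
  have h2 : j - 1 < ((List.range p.length).map (fun i => p.getVert (i+1))).length := by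
    simp; omega
  have key := (List.Nodup.getElem_inj_iff hnd (hi := h1) (hj := h2)).mp ?_
  · omega
  · simp only [List.getElem_map, List.getElem_range]
    rw [show i - 1 + 1 = i by omega, show j - 1 + 1 = j by omega]
    exact hij

lemma eq_one_of_val {x : Fin (n+3)} (h : x.val = 1) : x = 1 := by
  have h1 : ((1:ℕ) : Fin (n+3)) = 1 := by push_cast; rfl
  rw [← h1, Fin.ext_iff, Fin.val_natCast, Nat.mod_eq_of_lt (by omega)]
  exact h

lemma adj_cases {a b : Fin (n+3)} (h : (cycleGraph (n+3)).Adj a b) :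
    b = a + 1 ∨ b = a - 1 := by
  rw [cycleGraph_adj'] at h
  rcases h with h | h
  · right
    have h2 : a - b = 1 := eq_one_of_val h
    rw [← h2]; ring
  · left
    have h2 : b - a = 1 := eq_one_of_val h
    rw [← h2]; ring

lemma cycle_eq (v : Fin (n+3)) (p : (cycleGraph (n+3)).Walk v v) (hp : p.IsCycle) :
    p = cyc n v ∨ p = (cyc n v).reverse := by
  have hL3 : 3 ≤ p.length := hp.three_le_length
  have hadj0 : (cycleGraph (n+3)).Adj v (p.getVert 1) := by
    have := p.adj_getVert_succ (i := 0) (by omega)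
    simpa using this
  have hd1 : p.getVert 1 - v = 1 ∨ p.getVert 1 - v = -1 := by
    rcases adj_cases hadj0 with h | h
    · left; rw [h]; ring
    · right; rw [h]; ring
  have hne : ∀ i, i + 2 ≤ p.length → p.getVert i ≠ p.getVert (i+2) := by
    intro i hi h
    rcases Nat.eq_zero_or_pos i with rfl | hi1
    · rw [p.getVert_zero] at h
      have hL : p.getVert p.length = v := p.getVert_length
      have h2 : p.getVert 2 = p.getVert p.length := by rw [hL, ← h]
      have := getVert_inj_of_cycle hp (by omega) (by omega) (by omega) le_rfl h2
      omega
    · exact absurd (getVert_inj_of_cycle hp (by omega) (by omega) (by omega) (by omega) h)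
        (by omega)
  have hstep : ∀ i, i + 1 ≤ p.length → p.getVert (i+1) = p.getVert i + (p.getVert 1 - v) := by
    intro i
    induction i with
    | zero => intro _; rw [p.getVert_zero]; ring
    | succ i ih =>
      intro hi2
      have hprev := ih (by omega)
      have hadj : (cycleGraph (n+3)).Adj (p.getVert (i+1)) (p.getVert (i+2)) :=
        p.adj_getVert_succ (by omega)
      have hneq := hne i (by omega)
      rcases adj_cases hadj with hc | hc <;> rcases hd1 with he | he
      · rw [show i + 1 + 1 = i + 2 from rfl, hc, hprev, he]
      · exfalso; apply hneq
        rw [show i + 2 = i + 1 + 1 from rfl, hc, hprev, he]; ring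
      · exfalso; apply hneq
        rw [show i + 2 = i + 1 + 1 from rfl, hc, hprev, he]; ring
      · rw [show i + 1 + 1 = i + 2 from rfl, hc, hprev, he]; ring
  have hform : ∀ i, i ≤ p.length →
      p.getVert i = v + (i : Fin (n+3)) * (p.getVert 1 - v) := by
    intro i
    induction i with
    | zero => intro _; simp
    | succ i ih =>
      intro hi
      rw [hstep i (by omega), ih (by omega)]
      push_cast
      ring
  have hLm : p.length = n + 3 := by
    have h0 := hform p.length le_rfl
    rw [p.getVert_length] at h0
    have hz : ((p.length : ℕ) : Fin (n+3)) * (p.getVert 1 - v) = 0 :=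
      left_eq_add.mp h0
    have hcast : ((p.length : ℕ) : Fin (n+3)) = 0 := by
      rcases hd1 with he | he
      · rwa [he, mul_one] at hz
      · rw [he, mul_neg_one, neg_eq_zero] at hz
        exact hz
    have hdvd : (n+3) ∣ p.length := Fin.natCast_eq_zero.mp hcast
    have hle : p.length ≤ n + 3 := by
      have hnd := hp.support_nodup
      have hcard := hnd.length_le_card
      have hlen : p.support.tail.length = p.length := by
        rw [List.length_tail, SimpleGraph.Walk.length_support]
        omega
      rw [hlen] at hcard
      simpa using hcard
    have := Nat.le_of_dvd (by omega) hdvd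
    omega
  rcases hd1 with he | he
  · left
    apply walk_eq_of_support_eq
    rw [support_eq_map_getVert p, cyc_support, hLm]
    refine List.map_congr_left fun i hi => ?_
    simp only [List.mem_range] at hi
    rw [hform i (by omega), he, mul_one]
  · right
    apply walk_eq_of_support_eq
    rw [support_eq_map_getVert p, rev_support, hLm]
    refine List.map_congr_left fun i hi => ?_
    simp only [List.mem_range] at hi
    rw [hform i (by omega), he, mul_neg_one, sub_eq_add_neg]

lemma cyc_edges_toFinset (v : Fin (n+3)) :
    (cyc n v).edges.toFinset = (cycleGraph (n+3)).edgeFinset := by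
  ext e
  rw [List.mem_toFinset, SimpleGraph.mem_edgeFinset, cyc_edges]
  constructor
  · intro he
    rw [List.mem_map] at he
    obtain ⟨i, _, rfl⟩ := he
    exact adj_up _
  · intro he
    induction e with
    | _ a b =>
      rw [SimpleGraph.mem_edgeSet] at he
      rcases adj_cases he with hc | hc
      · rw [List.mem_map]
        refine ⟨(a - v).val, List.mem_range.mpr (a - v).is_lt, ?_⟩
        rw [Fin.cast_val_eq_self, add_sub_cancel, hc]
      · rw [List.mem_map]
        refine ⟨(b - v).val, List.mem_range.mpr (b - v).is_lt, ?_⟩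
        rw [Fin.cast_val_eq_self, add_sub_cancel]
        rw [hc, Sym2.eq_swap]
        congr 1
        ring

lemma edgeFinset_card : (cycleGraph (n+3)).edgeFinset.card = n + 3 := by
  rw [← cyc_edges_toFinset (0 : Fin (n+3)), List.card_toFinset,
    (cyc_edges_nodup (0 : Fin (n+3))).dedup, SimpleGraph.Walk.length_edges, cyc_length]

lemma key (n : ℕ) (R : Type) [CommRing R] (w : R) (f : Sym2 (Fin (n+3)) → R)
    (e₀ : Sym2 (Fin (n+3))) (he₀ : e₀ ∈ (cycleGraph (n+3)).edgeFinset)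
    (hf₀ : f e₀ = w ^ 2)
    (hf : ∀ e ∈ (cycleGraph (n+3)).edgeFinset, e ≠ e₀ → f e = w)
    (v : Fin (n+3)) :
    (∑ e ∈ (cycleGraph (n+3)).edgeFinset, f e ^ 2) +
      (∑ᶠ p ∈ {p : (cycleGraph (n+3)).Walk v v | p.IsCycle}, (p.edges.map f).prod) =
    w ^ 4 + ((n+2 : ℕ) : R) * w ^ 2 + 2 * w ^ (n+4) := by
  have hsum : ∑ e ∈ (cycleGraph (n+3)).edgeFinset, f e ^ 2
      = w ^ 4 + ((n+2 : ℕ) : R) * w ^ 2 := by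
    rw [← Finset.add_sum_erase _ _ he₀, hf₀]
    have h2 : ∑ e ∈ (cycleGraph (n+3)).edgeFinset.erase e₀, f e ^ 2
        = ∑ _e ∈ (cycleGraph (n+3)).edgeFinset.erase e₀, w ^ 2 :=
      Finset.sum_congr rfl fun e he => by
        rw [hf e (Finset.mem_of_mem_erase he) (Finset.ne_of_mem_erase he)]
    rw [h2, Finset.sum_const, Finset.card_erase_of_mem he₀, edgeFinset_card, nsmul_eq_mul,
      show n + 3 - 1 = n + 2 from rfl]
    push_cast
    ring
  have hprod : ∏ e ∈ (cycleGraph (n+3)).edgeFinset, f e = w ^ (n+4) := by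
    rw [← Finset.mul_prod_erase _ _ he₀, hf₀]
    have h2 : ∏ e ∈ (cycleGraph (n+3)).edgeFinset.erase e₀, f e
        = ∏ _e ∈ (cycleGraph (n+3)).edgeFinset.erase e₀, w :=
      Finset.prod_congr rfl fun e he => by
        rw [hf e (Finset.mem_of_mem_erase he) (Finset.ne_of_mem_erase he)]
    rw [h2, Finset.prod_const, Finset.card_erase_of_mem he₀, edgeFinset_card,
      show n + 3 - 1 = n + 2 from rfl]
    ring
  have hone : ((cyc n v).edges.map f).prod = w ^ (n+4) := by
    rw [← hprod, ← cyc_edges_toFinset v, List.prod_toFinset f (cyc_edges_nodup v)]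
  have hset : {p : (cycleGraph (n+3)).Walk v v | p.IsCycle}
      = {cyc n v, (cyc n v).reverse} := by
    ext p
    simp only [Set.mem_setOf_eq, Set.mem_insert_iff, Set.mem_singleton_iff]
    constructor
    · exact cycle_eq v p
    · rintro (rfl | rfl)
      · exact cyc_isCycle v
      · exact rev_isCycle v
  rw [hset, finsum_mem_pair (cyc_ne_rev v), hone, hsum,
    SimpleGraph.Walk.edges_reverse, List.map_reverse, List.prod_reverse, hone]
  ring

end TwistAux

/-- Twist knot formula, long-cycle component: on the cycle graph `C_(k-1)` (`k ≥ 4`)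
with one distinguished edge of weight `w²` and all other edges of weight `w`, the
cycle-sum at any vertex equals `w⁴ + (k-2)·w² + 2·w^k`. -/
theorem twistKnot_longCycle_cycleSum (k : ℕ) (hk : 4 ≤ k) (R : Type) [CommRing R]
    (w : R) (f : Sym2 (Fin (k - 1)) → R)
    (e₀ : Sym2 (Fin (k - 1))) (he₀ : e₀ ∈ (SimpleGraph.cycleGraph (k - 1)).edgeFinset)
    (hf₀ : f e₀ = w ^ 2)
    (hf : ∀ e ∈ (SimpleGraph.cycleGraph (k - 1)).edgeFinset, e ≠ e₀ → f e = w)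
    (v : Fin (k - 1)) :
    (∑ e ∈ (SimpleGraph.cycleGraph (k - 1)).edgeFinset, f e ^ 2) +
      (∑ᶠ p ∈ {p : (SimpleGraph.cycleGraph (k - 1)).Walk v v | p.IsCycle},
        (p.edges.map f).prod) =
    w ^ 4 + (k - 2 : ℕ) * w ^ 2 + 2 * w ^ k := by
  obtain ⟨n, rfl⟩ : ∃ n, k = n + 4 := ⟨k - 4, by omega⟩
  exact TwistAux.key n R w f e₀ he₀ hf₀ hf v
end
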